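/- arXiv:1705.05954 — 2 statements merged into one kernel-verified Lean document; each statement's English description precedes it below -/
import Mathlib

section
/- Consider PCOs with propagation delays τ_{ij} = τ_{ji} < 1 on each edge, a refractory period ρ with 2 max_{ij} τ_{ij} ≤ ρ < 1/2 + min_{ij} τ_{ij}, and updates only occurring when the receiving node's phase exceeds ρ. Then every phase configuration Δ with 0 ≤ Δ_{ij} ≤ τ_{ij} for all edges ij is a fixed point: no node ever updates its phase, because every firing of a neighbor j of node i is heard by i while Φ_i mod 1 ∈ [0, ρ]. -/
/-- In the delayed PCO model with refractory period `ρ`, every configuration whose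
circular phase differences on edges are bounded by the corresponding delays is a
fixed point: whenever a node `j` fires, each neighbor `i` hears the firing while its
own phase (mod 1) lies in `[0, ρ]`, hence never updates. -/
theorem delayed_pco_fixed_points {V : Type*} (G : SimpleGraph V)
    (τ : V → V → ℝ) (ρ : ℝ) (Φ : V → ℝ)
    (hτsymm : ∀ i j, G.Adj i j → τ i j = τ j i)
    (hτpos : ∀ i j, G.Adj i j → 0 ≤ τ i j)
    (hτlt : ∀ i j, G.Adj i j → τ i j < 1)
    (hρlow : ∀ i j, G.Adj i j → 2 * τ i j ≤ ρ)
    (hρhigh : ∀ i j, G.Adj i j → ρ < 1 / 2 + τ i j)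
    (hΔ : ∀ i j, G.Adj i j →
      min (Int.fract (Φ i - Φ j)) (Int.fract (Φ j - Φ i)) ≤ τ i j) :
    ∀ i j, G.Adj i j → ∀ t : ℝ, Int.fract (Φ j + t) = 0 →
      Int.fract (Φ i + t + τ i j) ≤ ρ := by
  intro i j hij t ht
  set T := τ i j with hT
  have hT0 : 0 ≤ T := hτpos i j hij
  have hρ2 : 2 * T ≤ ρ := hρlow i j hij
  have hTρ : T ≤ ρ := by linarith
  have hThalf : T < 1 / 2 := by have := hρhigh i j hij; linarith
  -- Φ j + t is an integer
  have hn : Φ j + t = (⌊Φ j + t⌋ : ℝ) := by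
    have := Int.self_sub_fract (Φ j + t)
    rw [ht] at this; linarith
  have key : Φ i + t + T = (Φ i - Φ j + T) + (⌊Φ j + t⌋ : ℝ) := by
    rw [← hn]; ring
  rw [key, Int.fract_add_intCast]
  set a := Φ i - Φ j with ha
  have hfa : 0 ≤ Int.fract a := Int.fract_nonneg a
  have hfa1 : Int.fract a < 1 := Int.fract_lt_one a
  have hsplit : a + T = (Int.fract a + T) + (⌊a⌋ : ℝ) := by
    rw [Int.fract]; ring
  have hmin := hΔ i j hij
  rcases le_or_gt (Int.fract a) T with h1 | h1
  · -- fract a ≤ T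
    have hlt : Int.fract a + T < 1 := by linarith
    rw [hsplit, Int.fract_add_intCast, Int.fract_eq_self.mpr ⟨by linarith, hlt⟩]
    linarith
  · -- fract (-a) ≤ T
    have h2 : Int.fract (Φ j - Φ i) ≤ T := by
      rcases min_le_iff.mp hmin with h | h
      · exact absurd h (by simpa [ha] using not_le.mpr h1)
      · exact h
    have hna : Φ j - Φ i = -a := by ring
    rw [hna] at h2
    have hfa0 : Int.fract a ≠ 0 := by
      intro h0; rw [h0] at h1; linarith
    have hneg : Int.fract (-a) = 1 - Int.fract a := Int.fract_neg hfa0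
    rw [hneg] at h2
    have hge : 1 ≤ Int.fract a + T := by linarith
    have hsplit2 : a + T = (Int.fract a + T - 1) + ((⌊a⌋ + 1 : ℤ) : ℝ) := by
      rw [Int.fract]; push_cast; ring
    rw [hsplit2, Int.fract_add_intCast,
      Int.fract_eq_self.mpr ⟨by linarith, by linarith⟩]
    linarith
end

section
/- With deterministic delays τ_{ij} and refractory period ρ satisfying 2 max τ_{ij} ≤ ρ < 1/2 + min τ_{ij}, any configuration with Δ_{ij} > τ_{ij} for some edge ij is not a fixed point: when the leading node of that pair fires, the lagging node hears the firing at a phase in (1/2 + τ_{ij}, 1), which lies outside the refractory period, hence it jumps forward and Δ_{ij} strictly decreases. -/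
/-- A configuration with a circular phase difference exceeding the delay on some edge
is not a fixed point: at the leading node's firing, the lagging node's phase lies in
`(1/2, 1 − τ)`, it hears the firing at a phase in `(ρ, 1)` (outside the refractory
period), and its forward jump strictly decreases the circular distance. -/
theorem delayed_pco_not_fixed (α τ ρ Φi Φj : ℝ) (hα : 0 < α)
    (hτ : 0 ≤ τ) (hρ : ρ < 1 / 2 + τ)
    (hdir : Int.fract (Φi - Φj) < Int.fract (Φj - Φi))
    (hΔ : τ < min (Int.fract (Φi - Φj)) (Int.fract (Φj - Φi))) :
    (1 / 2 < Int.fract (Φj - Φi) ∧ Int.fract (Φj - Φi) < 1 - τ) ∧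
    (ρ < Int.fract (Φj - Φi) + τ ∧ Int.fract (Φj - Φi) + τ < 1) ∧
    (Int.fract (Φj - Φi) + τ < min ((1 + α) * (Int.fract (Φj - Φi) + τ)) 1) ∧
    (1 - min ((1 + α) * (Int.fract (Φj - Φi) + τ)) 1 < Int.fract (Φi - Φj)) := by
  set a := Int.fract (Φi - Φj) with ha
  have hτa : τ < a := lt_of_lt_of_le hΔ (min_le_left _ _)
  have ha0 : a ≠ 0 := by
    have : 0 < a := lt_of_le_of_lt hτ hτa
    linarith
  have hb : Int.fract (Φj - Φi) = 1 - a := by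
    have : Φj - Φi = -(Φi - Φj) := by ring
    rw [this, Int.fract_neg ha0]
  rw [hb] at hdir ⊢
  have h2 : 1 / 2 < 1 - a := by linarith
  have hlt1 : 1 - a + τ < 1 := by linarith
  have hpos : 0 < 1 - a + τ := by linarith
  have hjump : 1 - a + τ < (1 + α) * (1 - a + τ) := by nlinarith
  refine ⟨⟨h2, by linarith⟩, ⟨by linarith, hlt1⟩,
    lt_min hjump hlt1, ?_⟩
  rcases le_total ((1 + α) * (1 - a + τ)) 1 with h | h
  · rw [min_eq_left h]; nlinarith
  · rw [min_eq_right h]; linarith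
end
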